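/- arXiv:math/0307154 — 2 statements merged into one kernel-verified Lean document; each statement's English description precedes it below -/
import Mathlib

section
/- Let Σ be a complete fan in R^n and fix a complete flag of cones σ_0 = {0} ⊂ σ_1 ⊂ ... ⊂ σ_n in Σ with dim σ_i = i. For i = 1,...,n let z_i be the product of the variables x_j corresponding to ray generators η_j with η_j ∈ σ_i and η_j ∉ σ_{i-1}, and let z_{n+1} be the product of the variables x_j with η_j ∉ σ_n. Then for every maximal cone τ of Σ, the monomial x̂_τ = ∏_{η_j ∉ τ} x_j is divisible by z_i for some i ∈ {1,...,n+1}. In particular the irrelevant ideal B(Σ) is contained in the ideal ⟨z_1,...,z_{n+1}⟩. -/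
open scoped Classical

noncomputable section

/-- `F` is a face of the pointed cone `σ`. -/
def IsFaceOf {n : ℕ} (F σ : PointedCone ℝ (Fin n → ℝ)) : Prop :=
  F ≤ σ ∧ ∀ x ∈ σ, ∀ y ∈ σ, x + y ∈ F → x ∈ F ∧ y ∈ F

/-- A fan in `ℝ^n` whose rays are generated by `η 0, …, η (s-1)`:
a collection of (pointed, ray-generated) cones closed under taking faces,
such that the intersection of two cones is a face of each. -/
structure Fan (n s : ℕ) where
  η : Fin s → (Fin n → ℝ)
  cones : Set (PointedCone ℝ (Fin n → ℝ))
  bot_mem : ⊥ ∈ cones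
  face_mem : ∀ σ ∈ cones, ∀ F, IsFaceOf F σ → F ∈ cones
  inter_face : ∀ σ ∈ cones, ∀ τ ∈ cones, IsFaceOf (σ ⊓ τ) σ
  ray_gen : ∀ σ ∈ cones, (σ : Set (Fin n → ℝ)) ⊆
      ↑(Submodule.span {c : ℝ // 0 ≤ c} {x | ∃ j, η j ∈ σ ∧ x = η j})

/-- The dimension of a cone: the dimension of its linear span. -/
def coneDim {n : ℕ} (σ : PointedCone ℝ (Fin n → ℝ)) : ℕ :=
  Module.finrank ℝ (Submodule.span ℝ (σ : Set (Fin n → ℝ)))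

/-!
Follow the flag inside a maximal cone `τ` for as long as possible. If the whole flag lies in `τ`,
then `σ n` is an `n`-dimensional face of `τ`, so `τ = σ n` and every ray outside `σ n` is outside
`τ`: `z (n+1)` divides `x̂_τ`. Otherwise there is a first step with `σ (i-1) ≤ τ` but
`σ i ≰ τ`. A ray of `σ i ∖ σ (i-1)` lying in `τ` would, together with `σ (i-1)`, give the face
`σ i ⊓ τ` of `σ i` full dimension `i`, forcing `σ i ≤ τ`; so no ray dividing `z i` lies in `τ`.
-/

theorem PointedCone.exists_sub_of_mem_span {𝕜 E : Type*} [Field 𝕜] [LinearOrder 𝕜]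
    [IsStrictOrderedRing 𝕜] [AddCommGroup E] [Module 𝕜 E] (C : PointedCone 𝕜 E) {x : E}
    (hx : x ∈ Submodule.span 𝕜 (C : Set E)) : ∃ a ∈ C, ∃ b ∈ C, x = a - b := by
  induction hx using Submodule.span_induction with
  | mem x hx => exact ⟨x, hx, 0, C.zero_mem, (sub_zero x).symm⟩
  | zero => exact ⟨0, C.zero_mem, 0, C.zero_mem, (sub_zero 0).symm⟩
  | add x y _ _ ihx ihy =>
    obtain ⟨a, ha, b, hb, rfl⟩ := ihx
    obtain ⟨c, hc, d, hd, rfl⟩ := ihy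
    exact ⟨a + c, C.add_mem ha hc, b + d, C.add_mem hb hd, (add_sub_add_comm a c b d).symm⟩
  | smul r x _ ih =>
    obtain ⟨a, ha, b, hb, rfl⟩ := ih
    rcases le_total 0 r with hr | hr
    · exact ⟨r • a, C.smul_mem hr ha, r • b, C.smul_mem hr hb, smul_sub r a b⟩
    · refine ⟨(-r) • b, C.smul_mem (neg_nonneg.mpr hr) hb,
        (-r) • a, C.smul_mem (neg_nonneg.mpr hr) ha, ?_⟩
      rw [neg_smul, neg_smul, neg_sub_neg, smul_sub]

section Cones

variable {n : ℕ} {F σ : PointedCone ℝ (Fin n → ℝ)}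

theorem coneDim_le (σ : PointedCone ℝ (Fin n → ℝ)) : coneDim σ ≤ n :=
  (Submodule.finrank_le _).trans_eq (Module.finrank_fin_fun ℝ)

theorem coneDim_add_one_le_of_notMem_span (hle : F ≤ σ) {x : Fin n → ℝ} (hx : x ∈ σ)
    (hxF : x ∉ Submodule.span ℝ (F : Set (Fin n → ℝ))) : coneDim F + 1 ≤ coneDim σ := by
  rw [coneDim, ← Submodule.finrank_sup_span_singleton hxF]
  refine Submodule.finrank_mono (sup_le (Submodule.span_mono hle) ?_)
  rw [Submodule.span_singleton_le_iff_mem]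
  exact Submodule.subset_span hx

theorem IsFaceOf.mem_of_mem_span (hF : IsFaceOf F σ) {x : Fin n → ℝ} (hx : x ∈ σ)
    (hxF : x ∈ Submodule.span ℝ (F : Set (Fin n → ℝ))) : x ∈ F := by
  obtain ⟨a, ha, b, hb, rfl⟩ := F.exists_sub_of_mem_span hxF
  exact (hF.2 _ hx _ (hF.1 hb) (by rwa [sub_add_cancel])).1

theorem IsFaceOf.le_of_coneDim_le (hF : IsFaceOf F σ) (hdim : coneDim σ ≤ coneDim F) :
    σ ≤ F := by
  have hspan : Submodule.span ℝ (F : Set (Fin n → ℝ)) = Submodule.span ℝ (σ : Set _) :=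
    Submodule.eq_of_le_of_finrank_le (Submodule.span_mono hF.1) hdim
  intro x hx
  exact hF.mem_of_mem_span hx (hspan ▸ Submodule.subset_span hx)

end Cones

namespace Fan

variable {n s : ℕ} (Sig : Fan n s) {σ σ' τ : PointedCone ℝ (Fin n → ℝ)}

theorem isFaceOf_of_le (hσ : σ ∈ Sig.cones) (hτ : τ ∈ Sig.cones) (h : τ ≤ σ) :
    IsFaceOf τ σ := by
  simpa only [inf_eq_right.mpr h] using Sig.inter_face σ hσ τ hτ

theorem le_of_le_of_coneDim_eq (hσ : σ ∈ Sig.cones) (hτ : τ ∈ Sig.cones)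
    (hdim : coneDim σ = n) (h : σ ≤ τ) : τ ≤ σ :=
  (Sig.isFaceOf_of_le hτ hσ h).le_of_coneDim_le ((coneDim_le τ).trans_eq hdim.symm)

theorem notMem_of_le_of_not_le (hσ : σ ∈ Sig.cones) (hσ' : σ' ∈ Sig.cones)
    (hτ : τ ∈ Sig.cones) (hσσ' : σ ≤ σ') (hdim : coneDim σ' = coneDim σ + 1) (hστ : σ ≤ τ)
    (hσ'τ : ¬ σ' ≤ τ) {x : Fin n → ℝ} (hx : x ∈ σ') (hxσ : x ∉ σ) : x ∉ τ := by
  intro hxτ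
  have hface : IsFaceOf (σ' ⊓ τ) σ' := Sig.inter_face σ' hσ' τ hτ
  have hxspan : x ∉ Submodule.span ℝ (σ : Set (Fin n → ℝ)) :=
    fun h => hxσ ((Sig.isFaceOf_of_le hσ' hσ hσσ').mem_of_mem_span hx h)
  have hdim_le : coneDim σ' ≤ coneDim (σ' ⊓ τ) :=
    hdim ▸ coneDim_add_one_le_of_notMem_span (le_inf hσσ' hστ) ⟨hx, hxτ⟩ hxspan
  exact hσ'τ ((hface.le_of_coneDim_le hdim_le).trans inf_le_right)

end Fan

theorem Fin.exists_castSucc_and_not_succ {n : ℕ} {P : Fin (n + 1) → Prop} (h0 : P 0)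
    (hlast : ¬ P (Fin.last n)) : ∃ i : Fin n, P i.castSucc ∧ ¬ P i.succ := by
  by_contra! h
  exact hlast (Fin.induction h0 h (Fin.last n))

theorem statement0_general {n s : ℕ} (k : Type*) [Field k] (Sig : Fan n s)
    (σ : Fin (n + 1) → PointedCone ℝ (Fin n → ℝ))
    (hmem : ∀ i, σ i ∈ Sig.cones)
    (h0 : σ 0 = ⊥)
    (hflag : ∀ i : Fin n, σ i.castSucc ≤ σ i.succ)
    (hdim : ∀ i : Fin (n + 1), coneDim (σ i) = (i : ℕ))
    (z : Fin (n + 1) → MvPolynomial (Fin s) k)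
    (hz : ∀ i : Fin n, z i.castSucc =
      ∏ j ∈ Finset.univ.filter
        (fun j => Sig.η j ∈ σ i.succ ∧ Sig.η j ∉ σ i.castSucc), MvPolynomial.X j)
    (hzlast : z (Fin.last n) =
      ∏ j ∈ Finset.univ.filter (fun j => Sig.η j ∉ σ (Fin.last n)), MvPolynomial.X j) :
    (∀ τ ∈ Sig.cones, coneDim τ = n →
        ∃ i : Fin (n + 1), z i ∣
          ∏ j ∈ Finset.univ.filter (fun j => Sig.η j ∉ τ), MvPolynomial.X j) ∧
    Ideal.span {p : MvPolynomial (Fin s) k | ∃ τ ∈ Sig.cones, coneDim τ = n ∧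
        p = ∏ j ∈ Finset.univ.filter (fun j => Sig.η j ∉ τ), MvPolynomial.X j} ≤
      Ideal.span (Set.range z) := by
  have hdvd : ∀ τ ∈ Sig.cones, coneDim τ = n →
      ∃ i : Fin (n + 1), z i ∣
        ∏ j ∈ Finset.univ.filter (fun j => Sig.η j ∉ τ), MvPolynomial.X j := by
    intro τ hτ _
    by_cases hlast : σ (Fin.last n) ≤ τ
    · have hτσ := Sig.le_of_le_of_coneDim_eq (hmem _) hτ (hdim _) hlast
      exact ⟨Fin.last n, hzlast ▸ Finset.prod_dvd_prod_of_subset _ _ _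
        (Finset.monotone_filter_right _ fun j _ hj hjτ => hj (hτσ hjτ))⟩
    · obtain ⟨i, hle, hnle⟩ := Fin.exists_castSucc_and_not_succ (P := (σ · ≤ τ))
        (h0 ▸ bot_le) hlast
      have hstep : coneDim (σ i.succ) = coneDim (σ i.castSucc) + 1 := by
        rw [hdim, hdim, Fin.val_succ, Fin.val_castSucc]
      exact ⟨i.castSucc, hz i ▸ Finset.prod_dvd_prod_of_subset _ _ _
        (Finset.monotone_filter_right _ fun j _ hj => Sig.notMem_of_le_of_not_le (hmem _)
          (hmem _) hτ (hflag i) hstep hle hnle hj.1 hj.2)⟩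
  refine ⟨hdvd, Ideal.span_le.mpr ?_⟩
  rintro p ⟨τ, hτ, hτdim, rfl⟩
  obtain ⟨i, c, hc⟩ := hdvd τ hτ hτdim
  exact hc ▸ Ideal.mul_mem_right _ _ (Ideal.subset_span ⟨i, rfl⟩)

/-- Given a complete fan `Σ` in `ℝ^n` and a complete flag of cones
`σ 0 = {0} ⊂ σ 1 ⊂ ⋯ ⊂ σ n` with `dim (σ i) = i`, let `z 1, …, z n` be the products of the
variables for the rays in `σ i ∖ σ (i-1)` and `z (n+1)` the product of the variables for
rays outside `σ n`.  Then for every maximal (`n`-dimensional) cone `τ` of `Σ` the monomial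
`x̂_τ = ∏_{η j ∉ τ} x j` is divisible by some `z i`; in particular the irrelevant ideal
`B(Σ)` is contained in `⟨z 1, …, z (n+1)⟩`. -/
theorem statement0 {n s : ℕ} (k : Type*) [Field k] (Sig : Fan n s)
    (hcomplete : ∀ x : Fin n → ℝ, ∃ σ ∈ Sig.cones, x ∈ σ)
    (σ : Fin (n + 1) → PointedCone ℝ (Fin n → ℝ))
    (hmem : ∀ i, σ i ∈ Sig.cones)
    (h0 : σ 0 = ⊥)
    (hflag : ∀ i : Fin n, σ i.castSucc ≤ σ i.succ)
    (hdim : ∀ i : Fin (n + 1), coneDim (σ i) = (i : ℕ))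
    (z : Fin (n + 1) → MvPolynomial (Fin s) k)
    (hz : ∀ i : Fin n, z i.castSucc =
      ∏ j ∈ Finset.univ.filter
        (fun j => Sig.η j ∈ σ i.succ ∧ Sig.η j ∉ σ i.castSucc), MvPolynomial.X j)
    (hzlast : z (Fin.last n) =
      ∏ j ∈ Finset.univ.filter (fun j => Sig.η j ∉ σ (Fin.last n)), MvPolynomial.X j) :
    (∀ τ ∈ Sig.cones, coneDim τ = n →
        ∃ i : Fin (n + 1), z i ∣
          ∏ j ∈ Finset.univ.filter (fun j => Sig.η j ∉ τ), MvPolynomial.X j) ∧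
    Ideal.span {p : MvPolynomial (Fin s) k | ∃ τ ∈ Sig.cones, coneDim τ = n ∧
        p = ∏ j ∈ Finset.univ.filter (fun j => Sig.η j ∉ τ), MvPolynomial.X j} ≤
      Ideal.span (Set.range z) :=
  statement0_general k Sig σ hmem h0 hflag hdim z hz hzlast
end
end

section
/- Let Σ' be a simplicial refinement of a fan Σ, let σ_{k+1} ∈ Σ be a (k+1)-dimensional cone and σ_k a facet of σ_{k+1} lying in Σ. If σ'_k ∈ Σ' is a k-dimensional cone contained in σ_k, then there exists a unique (k+1)-dimensional cone σ'_{k+1} ∈ Σ' contained in σ_{k+1} that contains σ'_k. -/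
noncomputable section
attribute [local instance] Classical.propDecidable

/-- `F'` is a refinement of the fan `F`: same support, and every cone of `F'`
is contained in some cone of `F`. -/
def Fan.Refines {n s : ℕ} (F' F : Fan n s) : Prop :=
  (⋃ σ ∈ F'.cones, (σ : Set (Fin n → ℝ))) = (⋃ σ ∈ F.cones, (σ : Set (Fin n → ℝ))) ∧
  ∀ σ' ∈ F'.cones, ∃ σ ∈ F.cones, σ' ≤ σ

/-- A fan is simplicial if the ray generators of each of its cones are linearly
independent. -/
def Fan.Simplicial {n s : ℕ} (F : Fan n s) : Prop :=
  ∀ σ ∈ F.cones, LinearIndependent ℝ (fun j : {j : Fin s // F.η j ∈ σ} => F.η j)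

lemma smul_mem'' {n : ℕ} (σ : PointedCone ℝ (Fin n → ℝ)) {c : ℝ} (hc : 0 ≤ c)
    {x : Fin n → ℝ} (hx : x ∈ σ) : c • x ∈ σ := by
  have := σ.smul_mem hc hx
  exact this

lemma span_mem_sub {n : ℕ} (σ : PointedCone ℝ (Fin n → ℝ)) {x : Fin n → ℝ}
    (hx : x ∈ Submodule.span ℝ (σ : Set (Fin n → ℝ))) :
    ∃ a ∈ σ, ∃ b ∈ σ, x = a - b := by
  refine Submodule.span_induction ?_ ?_ ?_ ?_ hx
  · intro x hx; exact ⟨x, hx, 0, σ.zero_mem, by simp⟩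
  · exact ⟨0, σ.zero_mem, 0, σ.zero_mem, by simp⟩
  · rintro x y - - ⟨a, ha, b, hb, rfl⟩ ⟨c, hc, d, hd, rfl⟩
    exact ⟨a + c, σ.add_mem ha hc, b + d, σ.add_mem hb hd, by abel⟩
  · rintro c x - ⟨a, ha, b, hb, rfl⟩
    rcases le_or_gt 0 c with h | h
    · exact ⟨c • a, smul_mem'' σ h ha, c • b, smul_mem'' σ h hb, by rw [smul_sub]⟩
    · exact ⟨(-c) • b, smul_mem'' σ (by linarith) hb, (-c) • a, smul_mem'' σ (by linarith) ha,
        by module⟩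

lemma face_eq_of_subset_span {n : ℕ} {F σ : PointedCone ℝ (Fin n → ℝ)}
    (hF : IsFaceOf F σ)
    (hspan : (σ : Set (Fin n → ℝ)) ⊆ (Submodule.span ℝ (F : Set (Fin n → ℝ)) : Set (Fin n → ℝ))) :
    F = σ := by
  refine le_antisymm hF.1 ?_
  intro x hx
  obtain ⟨a, ha, b, hb, hab⟩ := span_mem_sub F (hspan hx)
  have hxb : x + b = a := by rw [hab]; abel
  exact (hF.2 x hx b (hF.1 hb) (by rw [hxb]; exact ha)).1

lemma sum_coeff_unique {n : ℕ} {ι : Type*} [Fintype ι] {v : ι → (Fin n → ℝ)}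
    (hv : LinearIndependent ℝ v) (a b : ι → ℝ)
    (hab : ∑ j, a j • v j = ∑ j, b j • v j) : a = b := by
  have h0 : ∑ j, (a - b) j • v j = 0 := by
    simp [sub_smul, Finset.sum_sub_distrib, hab]
  have := Fintype.linearIndependent_iff.mp hv (a - b) h0
  funext j
  have hj := this j
  simpa [sub_eq_zero] using hj

lemma mem_of_arbitrarily_small {n : ℕ} {ι : Type*} [Fintype ι] {v : ι → (Fin n → ℝ)}
    (hv : LinearIndependent ℝ v) {σ : PointedCone ℝ (Fin n → ℝ)}
    (hσ : ∀ x, x ∈ σ ↔ ∃ c : ι → ℝ, (∀ j, 0 ≤ c j) ∧ ∑ j, c j • v j = x)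
    {x w : Fin n → ℝ}
    (h : ∀ δ : ℝ, 0 < δ → ∃ ε : ℝ, 0 < ε ∧ ε < δ ∧ x + ε • w ∈ σ) :
    x ∈ σ := by
  obtain ⟨ε₁, hε₁, -, hp₁⟩ := h 1 one_pos
  obtain ⟨ε₂, hε₂, hε₂₁, hp₂⟩ := h ε₁ hε₁
  obtain ⟨c₁, hc₁, hc₁e⟩ := (hσ _).mp hp₁
  obtain ⟨c₂, hc₂, hc₂e⟩ := (hσ _).mp hp₂
  set e : ι → ℝ := fun j => (ε₁ - ε₂)⁻¹ * (c₁ j - c₂ j) with he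
  have hne : ε₁ - ε₂ ≠ 0 := by linarith
  have hwe : ∑ j, e j • v j = w := by
    have hsub : ∑ j, (c₁ j - c₂ j) • v j = (ε₁ - ε₂) • w := by
      rw [show (∑ j, (c₁ j - c₂ j) • v j) = (∑ j, c₁ j • v j) - ∑ j, c₂ j • v j by
        simp [sub_smul, Finset.sum_sub_distrib]]
      rw [hc₁e, hc₂e]
      module
    calc ∑ j, e j • v j = (ε₁ - ε₂)⁻¹ • ∑ j, (c₁ j - c₂ j) • v j := by
          simp [he, mul_smul, Finset.smul_sum]
      _ = (ε₁ - ε₂)⁻¹ • ((ε₁ - ε₂) • w) := by rw [hsub]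
      _ = w := by rw [smul_smul, inv_mul_cancel₀ hne, one_smul]
  set d : ι → ℝ := fun j => c₁ j - ε₁ * e j with hd
  have hxe : ∑ j, d j • v j = x := by
    have : ∑ j, d j • v j = (∑ j, c₁ j • v j) - ε₁ • ∑ j, e j • v j := by
      simp [hd, sub_smul, Finset.sum_sub_distrib, mul_smul, Finset.smul_sum]
    rw [this, hc₁e, hwe]
    module
  have key : ∀ ε : ℝ, ∀ c : ι → ℝ, (∑ j, c j • v j = x + ε • w) → c = fun j => d j + ε * e j := by
    intro ε c hc
    apply sum_coeff_unique hv
    rw [hc]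
    have : ∑ j, (d j + ε * e j) • v j = (∑ j, d j • v j) + ε • ∑ j, e j • v j := by
      simp [add_smul, Finset.sum_add_distrib, mul_smul, Finset.smul_sum]
    rw [this, hxe, hwe]
  have hdpos : ∀ j, 0 ≤ d j := by
    intro j
    by_contra hneg
    push_neg at hneg
    have hδ : 0 < -d j / (|e j| + 1) := div_pos (by linarith) (by positivity)
    obtain ⟨ε, hε, hεδ, hp⟩ := h _ hδ
    obtain ⟨c, hc, hce⟩ := (hσ _).mp hp
    have hcj := congrFun (key ε c hce) j
    have h1 : ε * e j ≤ ε * |e j| := by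
      have := le_abs_self (e j); nlinarith
    have h2 : ε * (|e j| + 1) < -d j :=
      (lt_div_iff₀ (show (0:ℝ) < |e j| + 1 by positivity)).mp hεδ
    have := hc j
    rw [hcj] at this
    nlinarith [abs_nonneg (e j)]
  exact (hσ x).mpr ⟨d, hdpos, hxe⟩

lemma gen_set_eq_range {n s : ℕ} (F : Fan n s) (σ : PointedCone ℝ (Fin n → ℝ)) :
    {x | ∃ j, F.η j ∈ σ ∧ x = F.η j}
      = Set.range (fun j : {j : Fin s // F.η j ∈ σ} => F.η j.1) := by
  ext x
  constructor
  · rintro ⟨j, hj, rfl⟩; exact ⟨⟨j, hj⟩, rfl⟩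
  · rintro ⟨⟨j, hj⟩, rfl⟩; exact ⟨j, hj, rfl⟩

lemma cone_mem_iff {n s : ℕ} (F : Fan n s) {σ : PointedCone ℝ (Fin n → ℝ)}
    (hσ : σ ∈ F.cones) (x : Fin n → ℝ) :
    x ∈ σ ↔ ∃ c : {j : Fin s // F.η j ∈ σ} → ℝ,
      (∀ j, 0 ≤ c j) ∧ ∑ j, c j • F.η j.1 = x := by
  constructor
  · intro hx
    have hx' := F.ray_gen σ hσ hx
    rw [gen_set_eq_range] at hx'
    obtain ⟨c, hc⟩ := (Submodule.mem_span_range_iff_exists_fun _).mp hx'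
    refine ⟨fun j => (c j : ℝ), fun j => (c j).2, ?_⟩
    rw [← hc]
    exact Finset.sum_congr rfl fun j _ => (Nonneg.coe_smul (c j) (F.η j.1))
  · rintro ⟨c, hc, hsum⟩
    rw [← hsum]
    refine Submodule.sum_mem σ fun j _ => ?_
    have := σ.smul_mem (hc j) j.2
    exact this

lemma cones_finite {n s : ℕ} (F : Fan n s) : F.cones.Finite := by
  have hinj : Set.InjOn (fun σ : PointedCone ℝ (Fin n → ℝ) => {j : Fin s | F.η j ∈ σ}) F.cones := by
    intro σ₁ h₁ σ₂ h₂ hEq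
    have hEq' : {j : Fin s | F.η j ∈ σ₁} = {j : Fin s | F.η j ∈ σ₂} := hEq
    have hset : {x | ∃ j, F.η j ∈ σ₁ ∧ x = F.η j} = {x | ∃ j, F.η j ∈ σ₂ ∧ x = F.η j} := by
      ext x
      constructor
      · rintro ⟨j, hj, rfl⟩
        exact ⟨j, (Set.ext_iff.mp hEq' j).mp hj, rfl⟩
      · rintro ⟨j, hj, rfl⟩
        exact ⟨j, (Set.ext_iff.mp hEq' j).mpr hj, rfl⟩
    have e1 : σ₁ = Submodule.span {c : ℝ // 0 ≤ c} {x | ∃ j, F.η j ∈ σ₁ ∧ x = F.η j} := by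
      apply le_antisymm
      · intro x hx; exact F.ray_gen σ₁ h₁ hx
      · rw [Submodule.span_le]; rintro x ⟨j, hj, rfl⟩; exact hj
    have e2 : σ₂ = Submodule.span {c : ℝ // 0 ≤ c} {x | ∃ j, F.η j ∈ σ₂ ∧ x = F.η j} := by
      apply le_antisymm
      · intro x hx; exact F.ray_gen σ₂ h₂ hx
      · rw [Submodule.span_le]; rintro x ⟨j, hj, rfl⟩; exact hj
    rw [e1, e2, hset]
  exact Set.Finite.of_finite_image (Set.toFinite _) hinj

lemma exists_functional {n : ℕ} (V : Submodule ℝ (Fin n → ℝ)) {w0 : Fin n → ℝ}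
    (hw0 : w0 ∉ V) :
    ∃ φ : (Fin n → ℝ) →ₗ[ℝ] ℝ, V ≤ LinearMap.ker φ ∧ φ w0 ≠ 0 := by
  have hne : V.mkQ w0 ≠ 0 := by
    simpa [Submodule.Quotient.mk_eq_zero] using hw0
  obtain ⟨ψ, hψ⟩ : ∃ ψ : Module.Dual ℝ ((Fin n → ℝ) ⧸ V), ψ (V.mkQ w0) ≠ 0 := by
    by_contra hcon
    push_neg at hcon
    exact hne ((Module.forall_dual_apply_eq_zero_iff ℝ _).mp hcon)
  refine ⟨ψ.comp V.mkQ, ?_, hψ⟩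
  intro x hx
  have hx0 : V.mkQ x = 0 := by
    simpa [Submodule.Quotient.mk_eq_zero] using hx
  simp [LinearMap.mem_ker, hx0]
/-- Let `Sig'` be a simplicial refinement of the fan `Sig`, let
`σbig ∈ Sig` be a `(k+1)`-dimensional cone and `σfac` a facet (`k`-dimensional face)
of `σbig` lying in `Sig`.  If `σ'k ∈ Sig'` is a `k`-dimensional cone contained in
`σfac`, then there is a unique `(k+1)`-dimensional cone of `Sig'` contained in
`σbig` and containing `σ'k`. -/
theorem statement1 {n s k : ℕ} (Sig Sig' : Fan n s)
    (href : Sig'.Refines Sig) (hsimp : Sig'.Simplicial)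
    (σbig : PointedCone ℝ (Fin n → ℝ)) (hbig : σbig ∈ Sig.cones)
    (hdimbig : coneDim σbig = k + 1)
    (σfac : PointedCone ℝ (Fin n → ℝ)) (hfac : σfac ∈ Sig.cones)
    (hface : IsFaceOf σfac σbig) (hdimfac : coneDim σfac = k)
    (σ'k : PointedCone ℝ (Fin n → ℝ)) (hk : σ'k ∈ Sig'.cones)
    (hdimk : coneDim σ'k = k) (hsub : σ'k ≤ σfac) :
    ∃! σ' : PointedCone ℝ (Fin n → ℝ),
      σ' ∈ Sig'.cones ∧ coneDim σ' = k + 1 ∧ σ' ≤ σbig ∧ σ'k ≤ σ' := by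
  classical
  simp only [coneDim] at hdimbig hdimfac hdimk
  set V : Submodule ℝ (Fin n → ℝ) := Submodule.span ℝ (σ'k : Set (Fin n → ℝ)) with hV
  set W : Submodule ℝ (Fin n → ℝ) := Submodule.span ℝ (σbig : Set (Fin n → ℝ)) with hW
  have hkfac : (σ'k : Set (Fin n → ℝ)) ⊆ (σfac : Set (Fin n → ℝ)) := hsub
  have hfacbig : (σfac : Set (Fin n → ℝ)) ⊆ (σbig : Set (Fin n → ℝ)) := hface.1
  have hVW : V ≤ W := Submodule.span_mono (hkfac.trans hfacbig)
  -- V = span σfac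
  have hVfac : V = Submodule.span ℝ (σfac : Set (Fin n → ℝ)) :=
    Submodule.eq_of_le_of_finrank_le (Submodule.span_mono hkfac) (by rw [hdimfac, hdimk])
  -- w0 ∈ W \ V
  have hVltW : V < W := lt_of_le_of_ne hVW (fun h => by rw [h, hdimbig] at hdimk; omega)
  obtain ⟨w0, hw0W, hw0V⟩ := SetLike.exists_of_lt hVltW
  -- a functional vanishing on V, nonzero at w0, nonnegative on σbig
  obtain ⟨φ, hφV, hφw0, hφpos⟩ :
      ∃ φ : (Fin n → ℝ) →ₗ[ℝ] ℝ, V ≤ LinearMap.ker φ ∧ φ w0 ≠ 0 ∧ ∀ x ∈ σbig, 0 ≤ φ x := by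
    obtain ⟨φ₀, hφ₀V, hφ₀w0⟩ := exists_functional V hw0V
    -- W ⊓ ker φ₀ = V
    have hWker : W ⊓ LinearMap.ker φ₀ = V := by
      have h1 : V ≤ W ⊓ LinearMap.ker φ₀ := le_inf hVW hφ₀V
      have h2 : W ⊓ LinearMap.ker φ₀ < W := by
        refine lt_of_le_of_ne inf_le_left (fun h => hφ₀w0 ?_)
        have : W ≤ LinearMap.ker φ₀ := by rw [← h]; exact inf_le_right
        exact this hw0W
      have h3 : Module.finrank ℝ ↥(W ⊓ LinearMap.ker φ₀) < k + 1 :=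
        hdimbig ▸ Submodule.finrank_lt_finrank_of_lt h2
      exact (Submodule.eq_of_le_of_finrank_le h1 (by omega)).symm
    -- no mixed signs on σbig
    have hmix : ∀ x ∈ σbig, ∀ y ∈ σbig, 0 < φ₀ x → φ₀ y < 0 → False := by
      intro x hx y hy hpx hny
      have ha' : (φ₀ x) • y ∈ σbig := smul_mem'' σbig hpx.le hy
      have hb' : (-φ₀ y) • x ∈ σbig := smul_mem'' σbig (by linarith) hx
      have hz : (φ₀ x) • y + (-φ₀ y) • x ∈ σbig := σbig.add_mem ha' hb'
      have hzker : (φ₀ x) • y + (-φ₀ y) • x ∈ LinearMap.ker φ₀ := by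
        simp only [LinearMap.mem_ker, map_add, map_smul, smul_eq_mul]
        ring
      have hzV : (φ₀ x) • y + (-φ₀ y) • x ∈ V := by
        rw [← hWker]
        exact ⟨Submodule.subset_span hz, hzker⟩
      have hzfac : (φ₀ x) • y + (-φ₀ y) • x ∈ σfac := by
        rw [hVfac] at hzV
        obtain ⟨a, ha, b, hb, hab⟩ := span_mem_sub σfac hzV
        have : ((φ₀ x) • y + (-φ₀ y) • x) + b = a := by rw [hab]; abel
        exact (hface.2 _ hz b (hfacbig hb) (by rw [this]; exact ha)).1
      have hcomp : (φ₀ x) • y ∈ σfac := (hface.2 _ ha' _ hb' hzfac).1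
      have : φ₀ ((φ₀ x) • y) = 0 := by
        have : (φ₀ x) • y ∈ V := by rw [hVfac]; exact Submodule.subset_span hcomp
        exact hφ₀V this
      rw [map_smul, smul_eq_mul] at this
      nlinarith
    by_cases hcase : ∀ x ∈ σbig, 0 ≤ φ₀ x
    · exact ⟨φ₀, hφ₀V, hφ₀w0, hcase⟩
    · push_neg at hcase
      obtain ⟨y, hy, hφy⟩ := hcase
      refine ⟨-φ₀, ?_, by simpa using hφ₀w0, ?_⟩
      · intro x hx
        have hx0 := hφ₀V hx
        rw [LinearMap.mem_ker] at hx0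
        simp [LinearMap.mem_ker, hx0]
      · intro x hx
        simp only [LinearMap.neg_apply, neg_nonneg]
        by_contra hpos
        push_neg at hpos
        exact hmix x hx y hy hpos hφy
  -- an element of σbig with positive φ
  obtain ⟨w, hw, hφw⟩ : ∃ w ∈ σbig, 0 < φ w := by
    obtain ⟨a, ha, b, hb, hab⟩ := span_mem_sub σbig hw0W
    have hne : φ a ≠ φ b := by
      intro h
      apply hφw0
      rw [hab, map_sub, h, sub_self]
    rcases lt_or_ge 0 (φ a) with h | h
    · exact ⟨a, ha, h⟩
    · have ha0 : φ a = 0 := le_antisymm h (hφpos a ha)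
      rcases lt_or_ge 0 (φ b) with h' | h'
      · exact ⟨b, hb, h'⟩
      · exact absurd (le_antisymm h' (hφpos b hb)) (fun hb0 => hne (by rw [ha0, hb0]))
  -- the sum of the ray generators of σ'k
  set x0 : Fin n → ℝ := ∑ j : {j : Fin s // Sig'.η j ∈ σ'k}, Sig'.η j.1 with hx0
  have hx0k : x0 ∈ σ'k := Submodule.sum_mem _ fun j _ => j.2
  have hφx0 : φ x0 = 0 := hφV (Submodule.subset_span hx0k)
  -- the approximating points
  set p : ℕ → (Fin n → ℝ) := fun m => x0 + (1 / ((m : ℝ) + 1)) • w with hp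
  have hpbig : ∀ m, p m ∈ σbig :=
    fun m => σbig.add_mem (hfacbig (hkfac hx0k)) (smul_mem'' σbig (by positivity) hw)
  -- for each m, a cone of Sig' containing p m and contained in σbig
  have hsub' : ∀ m : ℕ, ∃ τ, τ ∈ Sig'.cones ∧ p m ∈ τ ∧ τ ≤ σbig := by
    intro m
    -- p m lies in some cone of Sig'
    have hpsupp : p m ∈ ⋃ σ ∈ Sig'.cones, (σ : Set (Fin n → ℝ)) := by
      rw [href.1]
      exact Set.mem_iUnion₂.mpr ⟨σbig, hbig, hpbig m⟩
    obtain ⟨τ₀, hτ₀, hpτ₀⟩ := Set.mem_iUnion₂.mp hpsupp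
    -- pick one of minimal dimension
    have hSne : {d : ℕ | ∃ τ, (τ ∈ Sig'.cones ∧ p m ∈ τ) ∧ coneDim τ = d}.Nonempty :=
      ⟨coneDim τ₀, τ₀, ⟨hτ₀, hpτ₀⟩, rfl⟩
    obtain ⟨τ, ⟨hτc, hτp⟩, hτd⟩ := Nat.sInf_mem hSne
    have hτmin : ∀ τ', τ' ∈ Sig'.cones → p m ∈ τ' → coneDim τ ≤ coneDim τ' := by
      intro τ' h1 h2
      rw [hτd]
      exact Nat.sInf_le ⟨τ', ⟨h1, h2⟩, rfl⟩
    obtain ⟨σc, hσc, hτσc⟩ := href.2 τ hτc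
    have hGface := Sig.inter_face σc hσc σbig hbig
    have hHface : IsFaceOf (τ ⊓ σbig) τ := by
      refine ⟨inf_le_left, ?_⟩
      intro x hx y hy hxy
      obtain ⟨hxyτ, hxybig⟩ := Submodule.mem_inf.mp hxy
      have hxyG : x + y ∈ σc ⊓ σbig := Submodule.mem_inf.mpr ⟨hτσc hxyτ, hxybig⟩
      obtain ⟨hxG, hyG⟩ := hGface.2 x (hτσc hx) y (hτσc hy) hxyG
      exact ⟨Submodule.mem_inf.mpr ⟨hx, (Submodule.mem_inf.mp hxG).2⟩,
        Submodule.mem_inf.mpr ⟨hy, (Submodule.mem_inf.mp hyG).2⟩⟩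
    have hHc : τ ⊓ σbig ∈ Sig'.cones := Sig'.face_mem τ hτc _ hHface
    have hpH : p m ∈ τ ⊓ σbig := Submodule.mem_inf.mpr ⟨hτp, hpbig m⟩
    have hdle : coneDim τ ≤ coneDim (τ ⊓ σbig) := hτmin _ hHc hpH
    simp only [coneDim] at hdle
    have hspan : Submodule.span ℝ ((τ ⊓ σbig : PointedCone ℝ (Fin n → ℝ)) : Set (Fin n → ℝ))
        = Submodule.span ℝ (τ : Set (Fin n → ℝ)) := by
      refine Submodule.eq_of_le_of_finrank_le (Submodule.span_mono ?_) hdle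
      intro x hx
      exact (Submodule.mem_inf.mp hx).1
    have hHτ : τ ⊓ σbig = τ := by
      refine face_eq_of_subset_span hHface ?_
      rw [hspan]
      exact Submodule.subset_span
    refine ⟨τ, hτc, hτp, ?_⟩
    rw [← hHτ]
    exact inf_le_right
  choose τf hτfc hτfp hτfs using hsub'
  -- pigeonhole: one cone occurs for arbitrarily small ε
  haveI : Finite ↥(Sig'.cones) := (cones_finite Sig').to_subtype
  obtain ⟨⟨τ, hτc⟩, hfib⟩ :=
    Finite.exists_infinite_fiber (fun m : ℕ => (⟨τf m, hτfc m⟩ : ↥(Sig'.cones)))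
  have hfib' : {m : ℕ | τf m = τ}.Infinite := by
    have h1 : ((fun m : ℕ => (⟨τf m, hτfc m⟩ : ↥(Sig'.cones))) ⁻¹' {⟨τ, hτc⟩}).Infinite :=
      Set.infinite_coe_iff.mp hfib
    refine h1.mono ?_
    intro m hm
    have h2 : (⟨τf m, hτfc m⟩ : ↥(Sig'.cones)) = ⟨τ, hτc⟩ := hm
    exact congrArg Subtype.val h2
  have hτsub : τ ≤ σbig := by
    obtain ⟨m, hm⟩ := hfib'.nonempty
    rw [← hm]
    exact hτfs m
  have hsmall : ∀ δ : ℝ, 0 < δ → ∃ ε : ℝ, 0 < ε ∧ ε < δ ∧ x0 + ε • w ∈ τ := by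
    intro δ hδ
    obtain ⟨m, hm, hmgt⟩ := hfib'.exists_gt ⌈1/δ⌉₊
    refine ⟨1 / ((m : ℝ) + 1), by positivity, ?_, ?_⟩
    · rw [div_lt_iff₀ (by positivity)]
      have h1 : 1 / δ ≤ (⌈1/δ⌉₊ : ℝ) := Nat.le_ceil _
      have h2 : ((⌈1/δ⌉₊ : ℕ) : ℝ) < (m : ℝ) := by exact_mod_cast hmgt
      have h3 : 1 / δ < (m : ℝ) + 1 := by linarith
      rw [div_lt_iff₀ hδ] at h3
      linarith
    · have := hτfp m
      rw [Set.mem_setOf_eq] at hm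
      rw [hm] at this
      exact this
  -- x0 ∈ τ by the simplicial closedness argument
  have hx0τ : x0 ∈ τ :=
    mem_of_arbitrarily_small (hsimp τ hτc) (cone_mem_iff Sig' hτc) hsmall
  -- σ'k ≤ τ
  have hks : σ'k ≤ τ := by
    have hF0 : IsFaceOf (σ'k ⊓ τ) σ'k := Sig'.inter_face σ'k hk τ hτc
    have hx0F : x0 ∈ σ'k ⊓ τ := Submodule.mem_inf.mpr ⟨hx0k, hx0τ⟩
    have hgen : ∀ j : {j : Fin s // Sig'.η j ∈ σ'k}, Sig'.η j.1 ∈ σ'k ⊓ τ := by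
      intro j
      have hyj : ∑ i ∈ Finset.univ.erase j, Sig'.η i.1 ∈ σ'k :=
        Submodule.sum_mem _ fun i _ => i.2
      have hsum : Sig'.η j.1 + ∑ i ∈ Finset.univ.erase j, Sig'.η i.1 = x0 := by
        rw [hx0]
        exact Finset.add_sum_erase _ (fun i : {j : Fin s // Sig'.η j ∈ σ'k} => Sig'.η i.1)
          (Finset.mem_univ j)
      exact (hF0.2 _ j.2 _ hyj (by rw [hsum]; exact hx0F)).1
    intro x hx
    obtain ⟨c, hc, hce⟩ := (cone_mem_iff Sig' hk x).mp hx
    rw [← hce]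
    exact Submodule.sum_mem _ fun j _ =>
      smul_mem'' τ (hc j) ((Submodule.mem_inf.mp (hgen j)).2)
  -- dimension of τ
  have hdimτ : coneDim τ = k + 1 := by
    simp only [coneDim]
    have hle1 : Module.finrank ℝ ↥(Submodule.span ℝ (τ : Set (Fin n → ℝ))) ≤ k + 1 := by
      rw [← hdimbig]
      exact Submodule.finrank_mono (Submodule.span_mono hτsub)
    have hgt : ¬ Module.finrank ℝ ↥(Submodule.span ℝ (τ : Set (Fin n → ℝ))) ≤ k := by
      intro hle
      have hVτ : V = Submodule.span ℝ (τ : Set (Fin n → ℝ)) :=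
        Submodule.eq_of_le_of_finrank_le (Submodule.span_mono hks) (by omega)
      obtain ⟨m, hm⟩ := hfib'.nonempty
      rw [Set.mem_setOf_eq] at hm
      have hpm : p m ∈ τ := by rw [← hm]; exact hτfp m
      have h0 : φ (p m) = 0 := hφV (hVτ ▸ Submodule.subset_span hpm)
      rw [hp] at h0
      simp only [map_add, map_smul, smul_eq_mul, hφx0, zero_add] at h0
      have hc : (0:ℝ) < 1 / ((m : ℝ) + 1) := by positivity
      nlinarith
    omega
  -- uniqueness
  have huniq : ∀ τ₁, (τ₁ ∈ Sig'.cones ∧ coneDim τ₁ = k + 1 ∧ τ₁ ≤ σbig ∧ σ'k ≤ τ₁) →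
      ∀ τ₂, (τ₂ ∈ Sig'.cones ∧ coneDim τ₂ = k + 1 ∧ τ₂ ≤ σbig ∧ σ'k ≤ τ₂) → τ₁ = τ₂ := by
    rintro τ₁ ⟨h1c, h1d, h1s, h1k⟩ τ₂ ⟨h2c, h2d, h2s, h2k⟩
    simp only [coneDim] at h1d h2d
    have hspan1 : Submodule.span ℝ (τ₁ : Set (Fin n → ℝ)) = W :=
      Submodule.eq_of_le_of_finrank_le (Submodule.span_mono h1s) (by rw [hdimbig, h1d])
    have hspan2 : Submodule.span ℝ (τ₂ : Set (Fin n → ℝ)) = W :=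
      Submodule.eq_of_le_of_finrank_le (Submodule.span_mono h2s) (by rw [hdimbig, h2d])
    have hFface1 : IsFaceOf (τ₁ ⊓ τ₂) τ₁ := Sig'.inter_face τ₁ h1c τ₂ h2c
    have hFface2 : IsFaceOf (τ₁ ⊓ τ₂) τ₂ := by
      have := Sig'.inter_face τ₂ h2c τ₁ h1c
      rwa [inf_comm] at this
    have hkF : σ'k ≤ τ₁ ⊓ τ₂ := le_inf h1k h2k
    by_cases hdF : k + 1 ≤ Module.finrank ℝ
        ↥(Submodule.span ℝ ((τ₁ ⊓ τ₂ : PointedCone ℝ (Fin n → ℝ)) : Set (Fin n → ℝ)))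
    · have e1 : Submodule.span ℝ ((τ₁ ⊓ τ₂ : PointedCone ℝ (Fin n → ℝ)) : Set (Fin n → ℝ))
          = Submodule.span ℝ (τ₁ : Set (Fin n → ℝ)) := by
        refine Submodule.eq_of_le_of_finrank_le
          (Submodule.span_mono (fun x hx => (Submodule.mem_inf.mp hx).1)) (by omega)
      have e2 : Submodule.span ℝ ((τ₁ ⊓ τ₂ : PointedCone ℝ (Fin n → ℝ)) : Set (Fin n → ℝ))
          = Submodule.span ℝ (τ₂ : Set (Fin n → ℝ)) := by
        refine Submodule.eq_of_le_of_finrank_le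
          (Submodule.span_mono (fun x hx => (Submodule.mem_inf.mp hx).2)) (by omega)
      have hτ1F : τ₁ ⊓ τ₂ = τ₁ :=
        face_eq_of_subset_span hFface1 (by rw [e1]; exact Submodule.subset_span)
      have hτ2F : τ₁ ⊓ τ₂ = τ₂ :=
        face_eq_of_subset_span hFface2 (by rw [e2]; exact Submodule.subset_span)
      rw [← hτ1F, hτ2F]
    · push_neg at hdF
      have hVF : V = Submodule.span ℝ ((τ₁ ⊓ τ₂ : PointedCone ℝ (Fin n → ℝ)) : Set (Fin n → ℝ)) :=
        Submodule.eq_of_le_of_finrank_le (Submodule.span_mono hkF) (by omega)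
      have hu : ∀ τ' : PointedCone ℝ (Fin n → ℝ),
          Submodule.span ℝ (τ' : Set (Fin n → ℝ)) = W → τ' ≤ σbig → ∃ u ∈ τ', 0 < φ u := by
        intro τ' hsp hsb
        have hwW : w ∈ Submodule.span ℝ (τ' : Set (Fin n → ℝ)) := by
          rw [hsp]
          exact Submodule.subset_span hw
        obtain ⟨a, ha, b, hb, hab⟩ := span_mem_sub τ' hwW
        refine ⟨a, ha, ?_⟩
        have h1 : φ w = φ a - φ b := by rw [hab, map_sub]
        have h2 : 0 ≤ φ b := hφpos b (hsb hb)
        linarith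
      obtain ⟨u₁, hu₁, hφu₁⟩ := hu τ₁ hspan1 h1s
      obtain ⟨u₂, hu₂, hφu₂⟩ := hu τ₂ hspan2 h2s
      have hu₁V : u₁ ∉ V := fun h => by
        have := hφV h
        rw [LinearMap.mem_ker] at this
        linarith
      have hsup : V ⊔ (Submodule.span ℝ {u₁}) = W := by
        have hle : V ⊔ (Submodule.span ℝ {u₁}) ≤ W := by
          refine sup_le hVW ?_
          rw [Submodule.span_singleton_le_iff_mem, ← hspan1]
          exact Submodule.subset_span hu₁
        have hlt : V < V ⊔ (Submodule.span ℝ {u₁}) := by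
          refine lt_of_le_of_ne le_sup_left (fun h => hu₁V ?_)
          rw [h]
          exact Submodule.mem_sup_right (Submodule.mem_span_singleton_self u₁)
        have h1 : k < Module.finrank ℝ ↥(V ⊔ (Submodule.span ℝ {u₁})) :=
          hdimk ▸ Submodule.finrank_lt_finrank_of_lt hlt
        exact Submodule.eq_of_le_of_finrank_le hle (by omega)
      have hu₂sup : u₂ ∈ V ⊔ (Submodule.span ℝ {u₁}) := by
        rw [hsup, ← hspan2]
        exact Submodule.subset_span hu₂
      obtain ⟨v, hv, z, hz, hvz⟩ := Submodule.mem_sup.mp hu₂sup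
      obtain ⟨c, hc⟩ := Submodule.mem_span_singleton.mp hz
      have hφv : φ v = 0 := hφV hv
      have hc' : 0 < c := by
        have hφz : φ u₂ = c * φ u₁ := by
          rw [← hvz, map_add, hφv, zero_add, ← hc, map_smul, smul_eq_mul]
        nlinarith
      have hvV : v ∈ Submodule.span ℝ (σ'k : Set (Fin n → ℝ)) := hv
      obtain ⟨a', ha', b', hb', hab'⟩ := span_mem_sub σ'k hvV
      have hz2 : b' + u₂ ∈ τ₂ := τ₂.add_mem (h2k hb') hu₂
      have hz1 : b' + u₂ ∈ τ₁ := by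
        have heq : b' + u₂ = a' + c • u₁ := by
          rw [← hvz, ← hc, hab']
          module
        rw [heq]
        exact τ₁.add_mem (h1k ha') (smul_mem'' τ₁ hc'.le hu₁)
      have hzF : b' + u₂ ∈ τ₁ ⊓ τ₂ := Submodule.mem_inf.mpr ⟨hz1, hz2⟩
      have hzV : b' + u₂ ∈ V := by
        rw [hVF]
        exact Submodule.subset_span hzF
      have h0 : φ (b' + u₂) = 0 := hφV hzV
      have hφb' : φ b' = 0 := hφV (Submodule.subset_span hb')
      rw [map_add, hφb', zero_add] at h0
      exact absurd h0 (ne_of_gt hφu₂)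
  exact ⟨τ, ⟨hτc, hdimτ, hτsub, hks⟩, fun τ' h' => huniq τ' h' τ ⟨hτc, hdimτ, hτsub, hks⟩⟩
end
end
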